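/- Suppose for all n the maximum number of unit-distance pairs among any n points on the sphere of radius 1/√2 is at most A·n^{4/3}. Then the number of 4-tuples (p₁, p₂, p₃, p₄) of distinct points of an n-point set P on this sphere forming a unit-distance 4-cycle (‖p₁-p₂‖ = ‖p₂-p₃‖ = ‖p₃-p₄‖ = ‖p₄-p₁‖ = 1) is at most C·n² for a constant C depending only on A. -/

import Mathlib

/-!
On the sphere of radius `1/√2` two points are at distance `1` exactly when they are orthogonal,
so unit-distance 4-cycles are 4-cycles of the orthogonality graph. If `p₃ ≠ ±p₁`, the points
`p₂` and `p₄` lie on the line `span {p₁, p₃}ᗮ` and on the sphere, hence in `{a, -a}`: at most four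
cycles share the pair `(p₁, p₃)`. The same holds for `(p₂, p₄)` when `p₄ ≠ -p₂`, by rotating
the cycle, and if `p₃ = -p₁` and `p₄ = -p₂` the cycle is determined by `(p₁, p₂)`. Hence there
are at most `9 n²` cycles.
-/

open RealInnerProductSpace Module Submodule

section Geometry

variable {F : Type*} [NormedAddCommGroup F] [NormedSpace ℝ F]

lemma eq_or_eq_neg_of_smul_eq_of_norm_eq {a b : F} {c : ℝ} (hc : c • a = b) (h : ‖b‖ = ‖a‖) :
    b = a ∨ b = -a := by
  rcases eq_or_ne a 0 with rfl | ha
  · simp [← hc]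
  have hc1 : |c| = 1 := by
    rwa [← hc, norm_smul, Real.norm_eq_abs, mul_eq_right₀ (norm_ne_zero_iff.2 ha)] at h
  rcases (abs_eq zero_le_one).1 hc1 with rfl | rfl <;> simp [← hc]

lemma linearIndependent_pair_of_norm_eq {u v : F} (h : ‖v‖ = ‖u‖) (hvu : v ≠ u)
    (hvnu : v ≠ -u) : LinearIndependent ℝ ![u, v] := by
  have hu : u ≠ 0 := by
    rintro rfl
    exact hvu (norm_eq_zero.1 (h.trans norm_zero))
  rw [LinearIndependent.pair_iff' hu]
  intro c hc
  rcases eq_or_eq_neg_of_smul_eq_of_norm_eq hc h with h' | h' <;> contradiction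

variable {E : Type*} [NormedAddCommGroup E] [InnerProductSpace ℝ E]

lemma dist_eq_one_iff_inner_eq_zero {u v : E} (h : ‖u‖ ^ 2 + ‖v‖ ^ 2 = 1) :
    dist u v = 1 ↔ ⟪u, v⟫ = 0 := by
  rw [← norm_sub_sq_eq_norm_sq_add_norm_sq_iff_real_inner_eq_zero, ← sq, ← sq, ← sq, h,
    dist_eq_norm, pow_eq_one_iff_of_nonneg (norm_nonneg _) two_ne_zero]

lemma mem_orthogonal_span_pair_iff {u v x : E} :
    x ∈ (span ℝ {u, v})ᗮ ↔ ⟪u, x⟫ = 0 ∧ ⟪v, x⟫ = 0 := by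
  rw [span_insert, ← inf_orthogonal, mem_inf,
    mem_orthogonal_singleton_iff_inner_right, mem_orthogonal_singleton_iff_inner_right]

lemma finrank_orthogonal_span_pair_add_two [FiniteDimensional ℝ E] {u v : E}
    (huv : LinearIndependent ℝ ![u, v]) :
    finrank ℝ (span ℝ {u, v})ᗮ + 2 = finrank ℝ E := by
  have h2 : finrank ℝ (span ℝ {u, v}) = 2 := by
    rw [← Matrix.range_cons_cons_empty u v ![], finrank_span_eq_card huv, Fintype.card_fin]
  rw [← (span ℝ {u, v}).finrank_add_finrank_orthogonal, h2, add_comm]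

lemma eq_or_eq_neg_of_mem_orthogonal_span_pair [FiniteDimensional ℝ E]
    (hE : finrank ℝ E = 3) {u v a b : E} (huv : LinearIndependent ℝ ![u, v])
    (ha : a ∈ (span ℝ {u, v})ᗮ) (hb : b ∈ (span ℝ {u, v})ᗮ) (hab : ‖b‖ = ‖a‖) :
    b = a ∨ b = -a := by
  rcases eq_or_ne a 0 with rfl | ha0
  · exact .inl (norm_eq_zero.1 (hab.trans norm_zero))
  have hK : finrank ℝ (span ℝ {u, v})ᗮ = 1 := by
    have := finrank_orthogonal_span_pair_add_two huv
    omega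
  rw [eq_span_singleton_of_mem_of_finrank_eq_one hK ha ha0] at hb
  obtain ⟨c, hc⟩ := mem_span_singleton.1 hb
  exact eq_or_eq_neg_of_smul_eq_of_norm_eq hc hab

end Geometry

section FourCycles

open Finset

variable {E : Type*} [NormedAddCommGroup E] [InnerProductSpace ℝ E]

lemma card_filter_inner_eq_zero_le_two [FiniteDimensional ℝ E] (hE : finrank ℝ E = 3)
    {P : Finset E} {r : ℝ} (hP : ∀ x ∈ P, ‖x‖ = r) {u v : E}
    (huv : LinearIndependent ℝ ![u, v]) :
    #{x ∈ P | ⟪u, x⟫ = 0 ∧ ⟪v, x⟫ = 0} ≤ 2 := by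
  classical
  rcases eq_empty_or_nonempty {x ∈ P | ⟪u, x⟫ = 0 ∧ ⟪v, x⟫ = 0} with h | ⟨a, ha⟩
  · simp [h]
  refine (card_le_card fun b hb => ?_).trans (card_le_two (a := a) (b := -a))
  rw [mem_filter, ← mem_orthogonal_span_pair_iff] at ha hb
  simpa using eq_or_eq_neg_of_mem_orthogonal_span_pair hE huv ha.2 hb.2
    ((hP b hb.1).trans (hP a ha.1).symm)

open scoped Classical in
noncomputable def orthoFourCycles (P : Finset E) : Finset (E × E × E × E) :=
  {t ∈ P ×ˢ P ×ˢ P ×ˢ P | t.1 ≠ t.2.1 ∧ t.1 ≠ t.2.2.1 ∧ t.1 ≠ t.2.2.2 ∧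
    t.2.1 ≠ t.2.2.1 ∧ t.2.1 ≠ t.2.2.2 ∧ t.2.2.1 ≠ t.2.2.2 ∧
    ⟪t.1, t.2.1⟫ = 0 ∧ ⟪t.2.1, t.2.2.1⟫ = 0 ∧ ⟪t.2.2.1, t.2.2.2⟫ = 0 ∧ ⟪t.2.2.2, t.1⟫ = 0}

variable {P : Finset E}

lemma mk_mem_orthoFourCycles {a b c d : E} :
    (a, b, c, d) ∈ orthoFourCycles P ↔ (a ∈ P ∧ b ∈ P ∧ c ∈ P ∧ d ∈ P) ∧
      (a ≠ b ∧ a ≠ c ∧ a ≠ d ∧ b ≠ c ∧ b ≠ d ∧ c ≠ d) ∧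
      ⟪a, b⟫ = 0 ∧ ⟪b, c⟫ = 0 ∧ ⟪c, d⟫ = 0 ∧ ⟪d, a⟫ = 0 := by
  simp only [orthoFourCycles, mem_filter, mem_product, and_assoc]

lemma rotate_mem_orthoFourCycles {a b c d : E} (h : (a, b, c, d) ∈ orthoFourCycles P) :
    (b, c, d, a) ∈ orthoFourCycles P := by
  rw [mk_mem_orthoFourCycles] at h ⊢
  obtain ⟨⟨ha, hb, hc, hd⟩, ⟨hab, hac, had, hbc, hbd, hcd⟩, h₁, h₂, h₃, h₄⟩ := h
  exact ⟨⟨hb, hc, hd, ha⟩, ⟨hbc, hbd, hab.symm, hcd, hac.symm, had.symm⟩, h₂, h₃, h₄, h₁⟩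

lemma card_orthoFourCycles_filter_antipodal_le [DecidableEq E] :
    #{t ∈ orthoFourCycles P | t.2.2.1 = -t.1 ∧ t.2.2.2 = -t.2.1} ≤ #P ^ 2 := by
  rw [sq, ← card_product]
  refine card_le_card_of_injOn (fun t => (t.1, t.2.1)) ?_ ?_
  · rintro ⟨a, b, c, d⟩ ht
    simp only [mem_coe, mem_filter, mk_mem_orthoFourCycles] at ht
    exact mem_product.2 ⟨ht.1.1.1, ht.1.1.2.1⟩
  · rintro ⟨a, b, c, d⟩ ht ⟨a', b', c', d'⟩ ht' h
    simp only [mem_coe, mem_filter] at ht ht'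
    simp only [Prod.mk.injEq] at h
    obtain ⟨-, rfl, rfl⟩ := ht
    obtain ⟨-, rfl, rfl⟩ := ht'
    obtain ⟨rfl, rfl⟩ := h
    rfl

variable [FiniteDimensional ℝ E] {r : ℝ}

lemma card_fiber_orthoFourCycles_le_four [DecidableEq E] (hE : finrank ℝ E = 3)
    (hP : ∀ x ∈ P, ‖x‖ = r) {p q : E} (hpq : LinearIndependent ℝ ![p, q]) :
    #{t ∈ orthoFourCycles P | t.1 = p ∧ t.2.2.1 = q} ≤ 4 := by
  set Q := {x ∈ P | ⟪p, x⟫ = 0 ∧ ⟪q, x⟫ = 0}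
  have hQ : #Q ≤ 2 := card_filter_inner_eq_zero_le_two hE hP hpq
  calc _ ≤ #(Q ×ˢ Q) := card_le_card_of_injOn (fun t => (t.2.1, t.2.2.2)) ?_ ?_
    _ ≤ 2 * 2 := by rw [card_product]; exact Nat.mul_le_mul hQ hQ
  · rintro ⟨a, b, c, d⟩ ht
    simp only [mem_coe, mem_filter, mk_mem_orthoFourCycles] at ht
    obtain ⟨⟨⟨-, hb, -, hd⟩, -, h₁, h₂, h₃, h₄⟩, rfl, rfl⟩ := ht
    simp only [Q, mem_coe, mem_product, mem_filter]
    exact ⟨⟨hb, h₁, real_inner_comm b c ▸ h₂⟩, ⟨hd, real_inner_comm d a ▸ h₄, h₃⟩⟩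
  · rintro ⟨a, b, c, d⟩ ht ⟨a', b', c', d'⟩ ht' h
    simp only [mem_coe, mem_filter] at ht ht'
    simp only [Prod.mk.injEq] at h
    obtain ⟨-, rfl, rfl⟩ := ht
    obtain ⟨-, rfl, rfl⟩ := ht'
    obtain ⟨rfl, rfl⟩ := h
    rfl

lemma card_orthoFourCycles_filter_third_ne_neg_first_le [DecidableEq E] (hE : finrank ℝ E = 3)
    (hP : ∀ x ∈ P, ‖x‖ = r) : #{t ∈ orthoFourCycles P | t.2.2.1 ≠ -t.1} ≤ 4 * #P ^ 2 := by
  rw [sq, ← card_product]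
  refine card_le_mul_card_image_of_maps_to (f := fun t => (t.1, t.2.2.1)) ?_ 4 ?_
  · rintro ⟨a, b, c, d⟩ ht
    simp only [mem_filter, mk_mem_orthoFourCycles] at ht
    exact mem_product.2 ⟨ht.1.1.1, ht.1.1.2.2.1⟩
  · rintro ⟨p, q⟩ -
    by_cases hpq : LinearIndependent ℝ ![p, q]
    · refine (card_le_card fun t ht => ?_).trans (card_fiber_orthoFourCycles_le_four hE hP hpq)
      simp only [mem_filter, Prod.mk.injEq] at ht ⊢
      exact ⟨ht.1.1, ht.2⟩
    · rw [card_eq_zero.2 (filter_eq_empty_iff.2 ?_)]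
      · exact Nat.zero_le 4
      rintro ⟨a, b, c, d⟩ ht ⟨rfl, rfl⟩
      simp only [mem_filter, mk_mem_orthoFourCycles] at ht
      obtain ⟨⟨⟨ha, -, hc, -⟩, ⟨-, hac, -⟩, -⟩, hca⟩ := ht
      exact hpq <|
        linearIndependent_pair_of_norm_eq ((hP c hc).trans (hP a ha).symm) hac.symm hca

lemma card_orthoFourCycles_filter_fourth_ne_neg_second_le [DecidableEq E] (hE : finrank ℝ E = 3)
    (hP : ∀ x ∈ P, ‖x‖ = r) :
    #{t ∈ orthoFourCycles P | t.2.2.2 ≠ -t.2.1} ≤ 4 * #P ^ 2 := by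
  refine (card_le_card_of_injOn (fun t => (t.2.1, t.2.2.1, t.2.2.2, t.1)) ?_ ?_).trans
    (card_orthoFourCycles_filter_third_ne_neg_first_le hE hP)
  · rintro ⟨a, b, c, d⟩ ht
    simp only [mem_coe, mem_filter] at ht ⊢
    exact ⟨rotate_mem_orthoFourCycles ht.1, ht.2⟩
  · rintro ⟨a, b, c, d⟩ - ⟨a', b', c', d'⟩ - h
    simp only [Prod.mk.injEq] at h ⊢
    tauto

lemma card_orthoFourCycles_le (hE : finrank ℝ E = 3) (hP : ∀ x ∈ P, ‖x‖ = r) :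
    #(orthoFourCycles P) ≤ 9 * #P ^ 2 := by
  classical
  calc #(orthoFourCycles P)
      ≤ #{t ∈ orthoFourCycles P | t.2.2.1 ≠ -t.1} +
          #{t ∈ orthoFourCycles P | t.2.2.2 ≠ -t.2.1} +
          #{t ∈ orthoFourCycles P | t.2.2.1 = -t.1 ∧ t.2.2.2 = -t.2.1} := by
        refine (card_le_card fun t ht => ?_).trans
          ((card_union_le _ _).trans (Nat.add_le_add_right (card_union_le _ _) _))
        simp only [mem_union, mem_filter]
        tauto
    _ ≤ 4 * #P ^ 2 + 4 * #P ^ 2 + #P ^ 2 :=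
        Nat.add_le_add (Nat.add_le_add (card_orthoFourCycles_filter_third_ne_neg_first_le hE hP)
          (card_orthoFourCycles_filter_fourth_ne_neg_second_le hE hP))
          card_orthoFourCycles_filter_antipodal_le
    _ = 9 * #P ^ 2 := by ring

end FourCycles

section Sphere

variable {E : Type*} [NormedAddCommGroup E] [InnerProductSpace ℝ E]

def unitDistFourCycles (P : Finset E) : Set (E × E × E × E) :=
  {t | t.1 ∈ P ∧ t.2.1 ∈ P ∧ t.2.2.1 ∈ P ∧ t.2.2.2 ∈ P ∧
    t.1 ≠ t.2.1 ∧ t.1 ≠ t.2.2.1 ∧ t.1 ≠ t.2.2.2 ∧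
    t.2.1 ≠ t.2.2.1 ∧ t.2.1 ≠ t.2.2.2 ∧ t.2.2.1 ≠ t.2.2.2 ∧
    dist t.1 t.2.1 = 1 ∧ dist t.2.1 t.2.2.1 = 1 ∧
    dist t.2.2.1 t.2.2.2 = 1 ∧ dist t.2.2.2 t.1 = 1}

lemma unitDistFourCycles_eq_orthoFourCycles {P : Finset E} (hP : ∀ x ∈ P, ‖x‖ = 1 / √2) :
    unitDistFourCycles P = orthoFourCycles P := by
  have hdist : ∀ x ∈ P, ∀ y ∈ P, dist x y = 1 ↔ ⟪x, y⟫ = 0 := fun x hx y hy =>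
    dist_eq_one_iff_inner_eq_zero (by rw [hP x hx, hP y hy]; norm_num)
  ext ⟨a, b, c, d⟩
  simp only [unitDistFourCycles, Set.mem_ofPred_eq, Finset.mem_coe, mk_mem_orthoFourCycles]
  constructor
  · rintro ⟨ha, hb, hc, hd, hne₁, hne₂, hne₃, hne₄, hne₅, hne₆, h₁, h₂, h₃, h₄⟩
    exact ⟨⟨ha, hb, hc, hd⟩, ⟨hne₁, hne₂, hne₃, hne₄, hne₅, hne₆⟩, (hdist a ha b hb).1 h₁,
      (hdist b hb c hc).1 h₂, (hdist c hc d hd).1 h₃, (hdist d hd a ha).1 h₄⟩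
  · rintro ⟨⟨ha, hb, hc, hd⟩, ⟨hne₁, hne₂, hne₃, hne₄, hne₅, hne₆⟩, h₁, h₂, h₃, h₄⟩
    exact ⟨ha, hb, hc, hd, hne₁, hne₂, hne₃, hne₄, hne₅, hne₆, (hdist a ha b hb).2 h₁,
      (hdist b hb c hc).2 h₂, (hdist c hc d hd).2 h₃, (hdist d hd a ha).2 h₄⟩

end Sphere

theorem four_cycles_on_sphere_quadratic_general :
    ∃ C : ℝ, ∀ (n : ℕ) (P : Finset (EuclideanSpace ℝ (Fin 3))),
      (∀ x ∈ P, ‖x‖ = 1 / Real.sqrt 2) → P.card = n →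
      ({t : EuclideanSpace ℝ (Fin 3) × EuclideanSpace ℝ (Fin 3) ×
          EuclideanSpace ℝ (Fin 3) × EuclideanSpace ℝ (Fin 3) |
        t.1 ∈ P ∧ t.2.1 ∈ P ∧ t.2.2.1 ∈ P ∧ t.2.2.2 ∈ P ∧
        t.1 ≠ t.2.1 ∧ t.1 ≠ t.2.2.1 ∧ t.1 ≠ t.2.2.2 ∧
        t.2.1 ≠ t.2.2.1 ∧ t.2.1 ≠ t.2.2.2 ∧ t.2.2.1 ≠ t.2.2.2 ∧
        dist t.1 t.2.1 = 1 ∧ dist t.2.1 t.2.2.1 = 1 ∧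
        dist t.2.2.1 t.2.2.2 = 1 ∧ dist t.2.2.2 t.1 = 1}.ncard : ℝ) ≤
        C * (n : ℝ) ^ 2 := by
  refine ⟨9, fun n P hP hn => ?_⟩
  change ((unitDistFourCycles P).ncard : ℝ) ≤ 9 * (n : ℝ) ^ 2
  rw [unitDistFourCycles_eq_orthoFourCycles hP, Set.ncard_coe_finset, ← hn]
  exact_mod_cast card_orthoFourCycles_le finrank_euclideanSpace_fin hP

theorem four_cycles_on_sphere_quadratic
    (A : ℝ)
    (hST : ∀ Q : Finset (EuclideanSpace ℝ (Fin 3)),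
      (∀ x ∈ Q, ‖x‖ = 1 / Real.sqrt 2) →
      ({e : EuclideanSpace ℝ (Fin 3) × EuclideanSpace ℝ (Fin 3) |
          e.1 ∈ Q ∧ e.2 ∈ Q ∧ dist e.1 e.2 = 1}.ncard : ℝ) ≤
        A * (Q.card : ℝ) ^ (4 / 3 : ℝ)) :
    ∃ C : ℝ, ∀ (n : ℕ) (P : Finset (EuclideanSpace ℝ (Fin 3))),
      (∀ x ∈ P, ‖x‖ = 1 / Real.sqrt 2) → P.card = n →
      ({t : EuclideanSpace ℝ (Fin 3) × EuclideanSpace ℝ (Fin 3) ×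
          EuclideanSpace ℝ (Fin 3) × EuclideanSpace ℝ (Fin 3) |
        t.1 ∈ P ∧ t.2.1 ∈ P ∧ t.2.2.1 ∈ P ∧ t.2.2.2 ∈ P ∧
        t.1 ≠ t.2.1 ∧ t.1 ≠ t.2.2.1 ∧ t.1 ≠ t.2.2.2 ∧
        t.2.1 ≠ t.2.2.1 ∧ t.2.1 ≠ t.2.2.2 ∧ t.2.2.1 ≠ t.2.2.2 ∧
        dist t.1 t.2.1 = 1 ∧ dist t.2.1 t.2.2.1 = 1 ∧
        dist t.2.2.1 t.2.2.2 = 1 ∧ dist t.2.2.2 t.1 = 1}.ncard : ℝ) ≤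
        C * (n : ℝ) ^ 2 :=
  four_cycles_on_sphere_quadratic_general
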